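/- Let z₁,…,z_t be variables and m ≥ 1. The family of linear forms {Σ_{i∈T} z_i : T ⊆ [t] nonempty, |T| ≤ m} has CS complexity ≤ m. Similarly, if z₀ is an additional variable, then the family {z₀ + Σ_{i∈T} z_i : T ⊆ [t], |T| ≤ m} (including T = ∅, giving the form z₀) has CS complexity ≤ m. -/
import Mathlib


section Defs

/-- The family of (affine-)linear forms, identified with their coefficient vectors in `ℚ^ι`,
has CS complexity `≤ d` at the index `j`: the remaining indices can be partitioned into `d`
classes so that the coefficient vector of the `j`-th form does not lie in the affine span of
the coefficient vectors of any single class. -/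
def CSAt {I ι : Type*} (L : I → (ι → ℚ)) (d : ℕ) (j : I) : Prop :=
  ∃ c : I → Fin d, ∀ t : Fin d,
    L j ∉ affineSpan ℚ (L '' {i | i ≠ j ∧ c i = t})

/-- The family of forms has CS complexity `≤ d`: it has CS complexity `≤ d` at every index. -/
def CSBounded {I ι : Type*} (L : I → (ι → ℚ)) (d : ℕ) : Prop :=
  ∀ j : I, CSAt L d j

end Defs

private def levelSet {κ : Type*} (φ : (κ → ℚ) →ₗ[ℚ] ℚ) (c : ℚ) : AffineSubspace ℚ (κ → ℚ) where
  carrier := {x | φ x = c}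
  smul_vsub_vadd_mem' := by
    intro r p₁ p₂ p₃ h₁ h₂ h₃
    simp only [Set.mem_setOf_eq] at *
    simp [vsub_eq_sub, vadd_eq_add, map_add, map_sub, map_smul, h₁, h₂, h₃]

private lemma notMem_affineSpan_of_sep {κ : Type*} (φ : (κ → ℚ) →ₗ[ℚ] ℚ) (c : ℚ)
    {s : Set (κ → ℚ)} (hs : ∀ x ∈ s, φ x = c) {x : κ → ℚ} (hx : φ x ≠ c) :
    x ∉ affineSpan ℚ s := by
  intro hmem
  exact hx ((affineSpan_le (Q := levelSet φ c)).2 hs hmem)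


/-- Let `z₁,…,z_t` be variables and `m ≥ 1`.  (i) The family of linear forms
`{Σ_{i∈T} z_i : T ⊆ [t] nonempty, |T| ≤ m}` has CS complexity `≤ m`.  (ii) If `z₀` is an
additional variable (indexed by `none`), the family `{z₀ + Σ_{i∈T} z_i : T ⊆ [t], |T| ≤ m}`
(including `T = ∅`, giving the form `z₀`) has CS complexity `≤ m`. -/
theorem stmt11 (t m : ℕ) (hm : 1 ≤ m) :
    CSBounded
      (fun (T : {T : Finset (Fin t) // T.Nonempty ∧ T.card ≤ m}) (i : Fin t) =>
        if i ∈ T.1 then (1 : ℚ) else 0) m ∧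
    CSBounded
      (fun (T : {T : Finset (Fin t) // T.card ≤ m}) (i : Option (Fin t)) =>
        match i with
        | none => (1 : ℚ)
        | some i => if i ∈ T.1 then 1 else 0) m := by
  refine ⟨?_, ?_⟩
  · rintro ⟨T₀, hne, hcard⟩
    set k := T₀.card with hkdef
    have hk1 : 1 ≤ k := hne.card_pos
    refine ⟨fun T =>
      if hT : (T₀ \ T.1).Nonempty then
        ⟨(T₀.equivFin ⟨(T₀ \ T.1).min' hT,
          (Finset.mem_sdiff.1 ((T₀ \ T.1).min'_mem hT)).1⟩).val,
          lt_of_lt_of_le (Fin.is_lt _) hcard⟩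
      else ⟨min (k + (T.1.card - k - 1)) (m - 1),
          Nat.lt_of_le_of_lt (Nat.min_le_right _ _) (by omega)⟩, ?_⟩
    intro v
    by_cases hv : v.val < k
    · -- class indexed by an element of T₀
      set ysub := T₀.equivFin.symm ⟨v.val, hv⟩ with hy
      refine notMem_affineSpan_of_sep (LinearMap.proj ysub.1) 0 ?_ ?_
      · rintro x ⟨T, ⟨hTj, hcT⟩, rfl⟩
        have hT1 : T.1 ≠ T₀ := fun h => hTj (Subtype.ext h)
        simp only at hcT
        split_ifs at hcT with hT
        · have hmem0 := (Finset.mem_sdiff.1 ((T₀ \ T.1).min'_mem hT)).1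
          have hval : (T₀.equivFin ⟨(T₀ \ T.1).min' hT, hmem0⟩) = ⟨v.val, hv⟩ := by
            apply Fin.ext
            simpa using congrArg Fin.val hcT
          have heq : (⟨(T₀ \ T.1).min' hT, hmem0⟩ : {x // x ∈ T₀}) = ysub := by
            rw [hy, Equiv.eq_symm_apply]
            exact hval
          have hmin : (T₀ \ T.1).min' hT = ysub.1 := congrArg Subtype.val heq
          have hnotin : ysub.1 ∉ T.1 := by
            have := (Finset.mem_sdiff.1 ((T₀ \ T.1).min'_mem hT)).2
            rwa [hmin] at this
          simp [LinearMap.proj_apply, hnotin]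
        · exfalso
          have hsub : T₀ ⊆ T.1 := by
            rwa [Finset.not_nonempty_iff_eq_empty, Finset.sdiff_eq_empty_iff_subset] at hT
          have h3 := Finset.card_lt_card (hsub.ssubset_of_ne (Ne.symm hT1))
          have h4 := T.2.2
          have hval := congrArg Fin.val hcT
          simp only at hval
          have hmle : k + (T.1.card - k - 1) ≤ m - 1 := by omega
          rw [Nat.min_eq_left hmle] at hval
          omega
      · have : ysub.1 ∈ T₀ := ysub.2
        simp [LinearMap.proj_apply, this]
    · -- class indexed by a cardinality
      push_neg at hv
      refine notMem_affineSpan_of_sep (∑ i ∈ T₀ᶜ, LinearMap.proj i)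
        ((v.val + 1 - k : ℕ) : ℚ) ?_ ?_
      · rintro x ⟨T, ⟨hTj, hcT⟩, rfl⟩
        have hT1 : T.1 ≠ T₀ := fun h => hTj (Subtype.ext h)
        simp only at hcT
        split_ifs at hcT with hT
        · exfalso
          have := congrArg Fin.val hcT
          simp at this
          have := (T₀.equivFin ⟨(T₀ \ T.1).min' hT,
            (Finset.mem_sdiff.1 ((T₀ \ T.1).min'_mem hT)).1⟩).isLt
          omega
        · have hsub : T₀ ⊆ T.1 := by
            rwa [Finset.not_nonempty_iff_eq_empty, Finset.sdiff_eq_empty_iff_subset] at hT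
          have h3 := Finset.card_lt_card (hsub.ssubset_of_ne (Ne.symm hT1))
          have hval := congrArg Fin.val hcT
          simp only at hval
          have hmle : k + (T.1.card - k - 1) ≤ m - 1 := by
            have := T.2.2; omega
          rw [Nat.min_eq_left hmle] at hval
          have hcardT : T.1.card = v.val + 1 := by omega
          have hsum : (∑ i ∈ T₀ᶜ, LinearMap.proj (R := ℚ) (φ := fun _ : Fin t => ℚ) i)
              (fun i => if i ∈ T.1 then (1 : ℚ) else 0)
              = ((T₀ᶜ ∩ T.1).card : ℚ) := by
            simp only [LinearMap.sum_apply, LinearMap.proj_apply]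
            rw [Finset.sum_ite_mem]
            simp
          rw [hsum]
          have : T₀ᶜ ∩ T.1 = T.1 \ T₀ := by
            rw [sdiff_eq, Finset.inter_comm]; rfl
          rw [this, Finset.card_sdiff_of_subset hsub]
          congr 1
          omega
      · have hsum : (∑ i ∈ T₀ᶜ, LinearMap.proj (R := ℚ) (φ := fun _ : Fin t => ℚ) i)
            (fun i => if i ∈ T₀ then (1 : ℚ) else 0) = ((T₀ᶜ ∩ T₀).card : ℚ) := by
          simp only [LinearMap.sum_apply, LinearMap.proj_apply]
          rw [Finset.sum_ite_mem]
          simp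
        rw [hsum]
        have he : T₀ᶜ ∩ T₀ = ∅ := by ext a; simp
        rw [he, Finset.card_empty, Nat.cast_zero]
        intro h
        have : v.val + 1 - k = 0 := by exact_mod_cast h.symm
        omega
  · rintro ⟨T₀, hcard⟩
    set k := T₀.card with hkdef
    refine ⟨fun T =>
      if hT : (T₀ \ T.1).Nonempty then
        ⟨(T₀.equivFin ⟨(T₀ \ T.1).min' hT,
          (Finset.mem_sdiff.1 ((T₀ \ T.1).min'_mem hT)).1⟩).val,
          lt_of_lt_of_le (Fin.is_lt _) hcard⟩
      else ⟨min (k + (T.1.card - k - 1)) (m - 1),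
          Nat.lt_of_le_of_lt (Nat.min_le_right _ _) (by omega)⟩, ?_⟩
    intro v
    by_cases hv : v.val < k
    · set ysub := T₀.equivFin.symm ⟨v.val, hv⟩ with hy
      refine notMem_affineSpan_of_sep (LinearMap.proj (some ysub.1)) 0 ?_ ?_
      · rintro x ⟨T, ⟨hTj, hcT⟩, rfl⟩
        have hT1 : T.1 ≠ T₀ := fun h => hTj (Subtype.ext h)
        simp only at hcT
        split_ifs at hcT with hT
        · have hmem0 := (Finset.mem_sdiff.1 ((T₀ \ T.1).min'_mem hT)).1
          have hval : (T₀.equivFin ⟨(T₀ \ T.1).min' hT, hmem0⟩) = ⟨v.val, hv⟩ := by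
            apply Fin.ext
            simpa using congrArg Fin.val hcT
          have heq : (⟨(T₀ \ T.1).min' hT, hmem0⟩ : {x // x ∈ T₀}) = ysub := by
            rw [hy, Equiv.eq_symm_apply]
            exact hval
          have hmin : (T₀ \ T.1).min' hT = ysub.1 := congrArg Subtype.val heq
          have hnotin : ysub.1 ∉ T.1 := by
            have := (Finset.mem_sdiff.1 ((T₀ \ T.1).min'_mem hT)).2
            rwa [hmin] at this
          simp [LinearMap.proj_apply, hnotin]
        · exfalso
          have hsub : T₀ ⊆ T.1 := by
            rwa [Finset.not_nonempty_iff_eq_empty, Finset.sdiff_eq_empty_iff_subset] at hT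
          have h3 := Finset.card_lt_card (hsub.ssubset_of_ne (Ne.symm hT1))
          have h4 := T.2
          have hval := congrArg Fin.val hcT
          simp only at hval
          have hmle : k + (T.1.card - k - 1) ≤ m - 1 := by omega
          rw [Nat.min_eq_left hmle] at hval
          omega
      · have : ysub.1 ∈ T₀ := ysub.2
        simp [LinearMap.proj_apply, this]
    · push_neg at hv
      refine notMem_affineSpan_of_sep (∑ i ∈ T₀ᶜ, LinearMap.proj (some i))
        ((v.val + 1 - k : ℕ) : ℚ) ?_ ?_
      · rintro x ⟨T, ⟨hTj, hcT⟩, rfl⟩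
        have hT1 : T.1 ≠ T₀ := fun h => hTj (Subtype.ext h)
        simp only at hcT
        split_ifs at hcT with hT
        · exfalso
          have := congrArg Fin.val hcT
          simp at this
          have := (T₀.equivFin ⟨(T₀ \ T.1).min' hT,
            (Finset.mem_sdiff.1 ((T₀ \ T.1).min'_mem hT)).1⟩).isLt
          omega
        · have hsub : T₀ ⊆ T.1 := by
            rwa [Finset.not_nonempty_iff_eq_empty, Finset.sdiff_eq_empty_iff_subset] at hT
          have h3 := Finset.card_lt_card (hsub.ssubset_of_ne (Ne.symm hT1))
          have hval := congrArg Fin.val hcT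
          simp only at hval
          have hmle : k + (T.1.card - k - 1) ≤ m - 1 := by
            have := T.2; omega
          rw [Nat.min_eq_left hmle] at hval
          have hcardT : T.1.card = v.val + 1 := by omega
          have hsum : (∑ i ∈ T₀ᶜ, LinearMap.proj (R := ℚ) (φ := fun _ : Option (Fin t) => ℚ) (some i))
              (fun i => match i with
                | none => (1 : ℚ)
                | some i => if i ∈ T.1 then 1 else 0)
              = ((T₀ᶜ ∩ T.1).card : ℚ) := by
            simp only [LinearMap.sum_apply, LinearMap.proj_apply]
            rw [Finset.sum_ite_mem]
            simp
          rw [hsum]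
          have : T₀ᶜ ∩ T.1 = T.1 \ T₀ := by
            rw [sdiff_eq, Finset.inter_comm]; rfl
          rw [this, Finset.card_sdiff_of_subset hsub]
          congr 1
          omega
      · have hsum : (∑ i ∈ T₀ᶜ, LinearMap.proj (R := ℚ) (φ := fun _ : Option (Fin t) => ℚ) (some i))
            (fun i => match i with
              | none => (1 : ℚ)
              | some i => if i ∈ T₀ then 1 else 0) = ((T₀ᶜ ∩ T₀).card : ℚ) := by
          simp only [LinearMap.sum_apply, LinearMap.proj_apply]
          rw [Finset.sum_ite_mem]
          simp
        rw [hsum]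
        have he : T₀ᶜ ∩ T₀ = ∅ := by ext a; simp
        rw [he, Finset.card_empty, Nat.cast_zero]
        intro h
        have : v.val + 1 - k = 0 := by exact_mod_cast h.symm
        omega
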